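/- arXiv:1801.09338 — 3 statements merged into one kernel-verified Lean document; each statement's English description precedes it below -/
import Mathlib

section
/- With Y = Wθ + Uα + e, Σ* = U(Ω⁻¹+Δ_ν)⁻¹Uᵀ + R, Ω* = (Ω⁻¹+Δ_ν)⁻¹, θ̃ = (WᵀΣ*⁻¹W + Δ_β)⁻¹WᵀΣ*⁻¹Y and α̃ = Ω*UᵀΣ*⁻¹(Y − Wθ̃), the predictor Ã = lᵀθ̃ + dᵀα̃ of A = lᵀθ + dᵀα has bias E[Ã − A] = −lᵀ(WᵀΣ*⁻¹W+Δ_β)⁻¹Δ_β θ + dᵀΩ*UᵀΣ*⁻¹W(WᵀΣ*⁻¹W+Δ_β)⁻¹Δ_β θ. -/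
open Matrix MeasureTheory ProbabilityTheory

/-!
Both estimators are linear in `Y`: `θ̃ = K Y` with `K = B⁻¹ Wᵀ Σ*⁻¹`, `B = Wᵀ Σ*⁻¹ W + Δ_β`, and
`α̃ = L (I - W K) Y` with `L = Ω* Uᵀ Σ*⁻¹`. Since `E[Y] = W θ` and `E[α] = 0`, the bias of any such
predictor is `lᵀ (K W - I) θ + dᵀ L (I - W K) W θ`. Full column rank of `W` makes `B` positive
definite, and then `K W = B⁻¹ (B - Δ_β) = I - B⁻¹ Δ_β`, which turns the two terms into the claim.
-/

namespace Matrix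

theorem mulVec_injective_of_rank_eq_card {m n K : Type*} [Fintype n] [Field K]
    {A : Matrix m n K} (h : A.rank = Fintype.card n) : Function.Injective A.mulVec :=
  mulVec_injective_iff.2 <| linearIndependent_iff_card_eq_finrank_span.2 <| by
    rw [← h, rank_eq_finrank_span_cols]
    rfl

theorem nonsing_inv_add_mul_eq_one_sub {n R : Type*} [Fintype n] [DecidableEq n] [CommRing R]
    (G Δ : Matrix n n R) (h : IsUnit (G + Δ).det) : (G + Δ)⁻¹ * G = 1 - (G + Δ)⁻¹ * Δ := by
  rw [eq_sub_iff_add_eq, ← Matrix.mul_add, nonsing_inv_mul _ h]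

end Matrix

section Expectation

variable {Ω ι : Type*} [MeasurableSpace Ω] {μ : Measure Ω} [Fintype ι] {X : Ω → ι → ℝ}

theorem integrable_dotProduct (hX : ∀ i, Integrable (fun ω => X ω i) μ) (v : ι → ℝ) :
    Integrable (fun ω => v ⬝ᵥ X ω) μ :=
  integrable_finsetSum _ fun i _ => (hX i).const_mul (v i)

theorem integral_dotProduct (hX : ∀ i, Integrable (fun ω => X ω i) μ) (v : ι → ℝ) :
    ∫ ω, v ⬝ᵥ X ω ∂μ = v ⬝ᵥ fun i => ∫ ω, X ω i ∂μ := by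
  simp only [dotProduct]
  rw [integral_finsetSum _ fun i _ => (hX i).const_mul (v i)]
  simp only [integral_const_mul]

end Expectation

theorem integral_linear_predictor_error {Ω : Type*} [MeasurableSpace Ω] {μ : Measure Ω}
    [IsProbabilityMeasure μ] {N p q : ℕ}
    (W : Matrix (Fin N) (Fin p) ℝ) (U : Matrix (Fin N) (Fin q) ℝ)
    (K : Matrix (Fin p) (Fin N) ℝ) (L : Matrix (Fin q) (Fin N) ℝ)
    (θ l : Fin p → ℝ) (d : Fin q → ℝ) (α : Ω → Fin q → ℝ) (e : Ω → Fin N → ℝ)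
    (hαint : ∀ i, Integrable (fun ω => α ω i) μ) (heint : ∀ i, Integrable (fun ω => e ω i) μ)
    (hα0 : ∀ i, ∫ ω, α ω i ∂μ = 0) (he0 : ∀ i, ∫ ω, e ω i ∂μ = 0)
    (Y : Ω → Fin N → ℝ) (hY : ∀ ω, Y ω = W *ᵥ θ + U *ᵥ α ω + e ω)
    (θt : Ω → Fin p → ℝ) (hθt : ∀ ω, θt ω = K *ᵥ Y ω)
    (αt : Ω → Fin q → ℝ) (hαt : ∀ ω, αt ω = L *ᵥ (Y ω - W *ᵥ θt ω)) :
    ∫ ω, (l ⬝ᵥ θt ω + d ⬝ᵥ αt ω) - (l ⬝ᵥ θ + d ⬝ᵥ α ω) ∂μ =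
      l ⬝ᵥ ((K * W - 1) *ᵥ θ) + d ⬝ᵥ ((L * (W - W * (K * W))) *ᵥ θ) := by
  set P := L * (1 - W * K)
  have hαt' : ∀ ω, αt ω = P *ᵥ Y ω := fun ω => by
    simp only [hαt, hθt, P, ← mulVec_mulVec, sub_mulVec, one_mulVec]
  set u := l ᵥ* K + d ᵥ* P
  set c := l ⬝ᵥ ((K * W - 1) *ᵥ θ) + d ⬝ᵥ ((P * W) *ᵥ θ)
  have herror : ∀ ω, (l ⬝ᵥ θt ω + d ⬝ᵥ αt ω) - (l ⬝ᵥ θ + d ⬝ᵥ α ω) =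
      c + ((u ᵥ* U - d) ⬝ᵥ α ω + u ⬝ᵥ e ω) := fun ω => by
    simp only [c, u, hθt, hαt', hY, mulVec_add, dotProduct_add, add_dotProduct, sub_dotProduct,
      dotProduct_mulVec, vecMul_vecMul, add_vecMul, vecMul_sub, vecMul_one]
    ring
  have hnoise : Integrable (fun ω => (u ᵥ* U - d) ⬝ᵥ α ω + u ⬝ᵥ e ω) μ :=
    (integrable_dotProduct hαint _).add (integrable_dotProduct heint _)
  simp_rw [herror]
  rw [integral_add (integrable_const c) hnoise,
    integral_add (integrable_dotProduct hαint _) (integrable_dotProduct heint _),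
    integral_dotProduct hαint, integral_dotProduct heint]
  simp [hα0, he0, c, P, Matrix.mul_assoc, Matrix.mul_sub, Matrix.sub_mul]

theorem naive_predictor_bias_general
    {N p q : ℕ}
    (W : Matrix (Fin N) (Fin p) ℝ) (U : Matrix (Fin N) (Fin q) ℝ)
    (θ : Fin p → ℝ) (l : Fin p → ℝ) (d : Fin q → ℝ)
    (Ωm : Matrix (Fin q) (Fin q) ℝ) (R : Matrix (Fin N) (Fin N) ℝ)
    (Δβ : Matrix (Fin p) (Fin p) ℝ) (Δν : Matrix (Fin q) (Fin q) ℝ)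
    (hW : W.rank = p) (hΩ : Ωm.PosDef) (hR : R.PosDef)
    (hΔβ : Δβ.PosSemidef) (hΔν : Δν.PosSemidef)
    {Zs : Type*} [MeasurableSpace Zs] (μ : Measure Zs) [IsProbabilityMeasure μ]
    (α : Zs → Fin q → ℝ) (e : Zs → Fin N → ℝ)
    (hαint : ∀ i, Integrable (fun ω => α ω i) μ)
    (heint : ∀ i, Integrable (fun ω => e ω i) μ)
    (hα0 : ∀ i, ∫ ω, α ω i ∂μ = 0)
    (he0 : ∀ i, ∫ ω, e ω i ∂μ = 0)
    (Ωstar : Matrix (Fin q) (Fin q) ℝ)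
    (Sstar : Matrix (Fin N) (Fin N) ℝ)
    (hSstar : Sstar = U * (Ωm⁻¹ + Δν)⁻¹ * Uᵀ + R)
    (Y : Zs → Fin N → ℝ)
    (hY : ∀ ω, Y ω = W.mulVec θ + U.mulVec (α ω) + e ω)
    (θt : Zs → Fin p → ℝ)
    (hθt : ∀ ω, θt ω = ((Wᵀ * Sstar⁻¹ * W + Δβ)⁻¹ * Wᵀ * Sstar⁻¹).mulVec (Y ω))
    (αt : Zs → Fin q → ℝ)
    (hαt : ∀ ω, αt ω = (Ωstar * Uᵀ * Sstar⁻¹).mulVec (Y ω - W.mulVec (θt ω))) :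
    (∫ ω, ((l ⬝ᵥ θt ω + d ⬝ᵥ αt ω) - (l ⬝ᵥ θ + d ⬝ᵥ α ω)) ∂μ) =
      -(l ⬝ᵥ (((Wᵀ * Sstar⁻¹ * W + Δβ)⁻¹ * Δβ).mulVec θ))
      + d ⬝ᵥ ((Ωstar * Uᵀ * Sstar⁻¹ * W * (Wᵀ * Sstar⁻¹ * W + Δβ)⁻¹ * Δβ).mulVec θ) := by
  have hS : Sstar.PosDef := by
    have hUΩU := (hΩ.inv.add_posSemidef hΔν).inv.posSemidef.mul_mul_conjTranspose_same U
    rw [conjTranspose_eq_transpose_of_trivial] at hUΩU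
    exact hSstar ▸ PosDef.posSemidef_add hUΩU hR
  have hB : IsUnit (Wᵀ * Sstar⁻¹ * W + Δβ).det := by
    have hWSW := hS.inv.conjTranspose_mul_mul_same (mulVec_injective_of_rank_eq_card
      (hW.trans (Fintype.card_fin p).symm))
    rw [conjTranspose_eq_transpose_of_trivial] at hWSW
    exact (hWSW.add_posSemidef hΔβ).det_pos.ne'.isUnit
  have hKW : (Wᵀ * Sstar⁻¹ * W + Δβ)⁻¹ * Wᵀ * Sstar⁻¹ * W =
      1 - (Wᵀ * Sstar⁻¹ * W + Δβ)⁻¹ * Δβ := by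
    simpa only [Matrix.mul_assoc] using nonsing_inv_add_mul_eq_one_sub _ Δβ hB
  rw [integral_linear_predictor_error W U _ _ θ l d α e hαint heint hα0 he0 Y hY θt hθt αt hαt,
    hKW, sub_sub_cancel_left, Matrix.mul_sub W, Matrix.mul_one, sub_sub_cancel, neg_mulVec,
    dotProduct_neg]
  simp only [Matrix.mul_assoc]

/-- bias of the naive predictor Ã = lᵀθ̃ + dᵀα̃ of the mixed effect A. -/
theorem naive_predictor_bias
    {N p q : ℕ}
    (W : Matrix (Fin N) (Fin p) ℝ) (U : Matrix (Fin N) (Fin q) ℝ)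
    (θ : Fin p → ℝ) (l : Fin p → ℝ) (d : Fin q → ℝ)
    (Ωm : Matrix (Fin q) (Fin q) ℝ) (R : Matrix (Fin N) (Fin N) ℝ)
    (Δβ : Matrix (Fin p) (Fin p) ℝ) (Δν : Matrix (Fin q) (Fin q) ℝ)
    (hW : W.rank = p) (hΩ : Ωm.PosDef) (hR : R.PosDef)
    (hΔβ : Δβ.PosSemidef) (hΔν : Δν.PosSemidef)
    {Zs : Type*} [MeasurableSpace Zs] (μ : Measure Zs) [IsProbabilityMeasure μ]
    (α : Zs → Fin q → ℝ) (e : Zs → Fin N → ℝ)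
    (hmα : Measurable α) (hme : Measurable e)
    (hindep : IndepFun α e μ)
    (hαint : ∀ i, Integrable (fun ω => α ω i) μ)
    (heint : ∀ i, Integrable (fun ω => e ω i) μ)
    (hα0 : ∀ i, ∫ ω, α ω i ∂μ = 0)
    (he0 : ∀ i, ∫ ω, e ω i ∂μ = 0)
    (Ωstar : Matrix (Fin q) (Fin q) ℝ) (hΩstar : Ωstar = (Ωm⁻¹ + Δν)⁻¹)
    (Sstar : Matrix (Fin N) (Fin N) ℝ)
    (hSstar : Sstar = U * (Ωm⁻¹ + Δν)⁻¹ * Uᵀ + R)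
    (Y : Zs → Fin N → ℝ)
    (hY : ∀ ω, Y ω = W.mulVec θ + U.mulVec (α ω) + e ω)
    (θt : Zs → Fin p → ℝ)
    (hθt : ∀ ω, θt ω = ((Wᵀ * Sstar⁻¹ * W + Δβ)⁻¹ * Wᵀ * Sstar⁻¹).mulVec (Y ω))
    (αt : Zs → Fin q → ℝ)
    (hαt : ∀ ω, αt ω = (Ωstar * Uᵀ * Sstar⁻¹).mulVec (Y ω - W.mulVec (θt ω))) :
    (∫ ω, ((l ⬝ᵥ θt ω + d ⬝ᵥ αt ω) - (l ⬝ᵥ θ + d ⬝ᵥ α ω)) ∂μ) =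
      -(l ⬝ᵥ (((Wᵀ * Sstar⁻¹ * W + Δβ)⁻¹ * Δβ).mulVec θ))
      + d ⬝ᵥ ((Ωstar * Uᵀ * Sstar⁻¹ * W * (Wᵀ * Sstar⁻¹ * W + Δβ)⁻¹ * Δβ).mulVec θ) :=
  naive_predictor_bias_general W U θ l d Ωm R Δβ Δν hW hΩ hR hΔβ hΔν μ α e hαint heint hα0 he0 Ωstar
    Sstar hSstar Y hY θt hθt αt hαt
end

section
/- Define the bias-corrected predictor Ã_c = lᵀθ̃ + dᵀα̃ + lᵀ(WᵀΣ*⁻¹W+Δ_β)⁻¹Δ_β θ̃ − dᵀΩ*UᵀΣ*⁻¹W(WᵀΣ*⁻¹W+Δ_β)⁻¹Δ_β θ̃. Then its bias satisfies E[Ã_c − A] = −lᵀ(WᵀΣ*⁻¹W+Δ_β)⁻¹Δ_β(WᵀΣ*⁻¹W+Δ_β)⁻¹Δ_β θ + dᵀΩ*UᵀΣ*⁻¹W(WᵀΣ*⁻¹W+Δ_β)⁻¹Δ_β(WᵀΣ*⁻¹W+Δ_β)⁻¹Δ_β θ; i.e., the bias equals the correction matrix (WᵀΣ*⁻¹W+Δ_β)⁻¹Δ_β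 applied twice. -/
open Matrix MeasureTheory ProbabilityTheory

/-!
With `M = WᵀΣ*⁻¹W + Δ_β`, `G = M⁻¹WᵀΣ*⁻¹`, `K = M⁻¹Δ_β` and `H = Ω*UᵀΣ*⁻¹`, the estimators are
`θ̃ = GY` and `α̃ = H(Y − Wθ̃)`, so the corrected predictor is a linear functional `φ ⬝ᵥ Y` of the
data. As `α` and `e` are centred, its bias is `(φᵀW − lᵀ)θ`. Positive definiteness makes `M`
invertible, whence `GW = 1 − K`; then `φᵀW = lᵀ(1 + K)(1 − K) + dᵀHWK² = lᵀ − lᵀK² + dᵀHWK²`,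
which is the claim: the correction `K` applied once turns the bias `−K` of `θ̃` into `−K²`.
-/

theorem Matrix.mulVec_injective_of_rank_eq_card_s2 {m n K : Type*} [Fintype n] [Field K]
    {A : Matrix m n K} (h : A.rank = Fintype.card n) : Function.Injective A.mulVec := by
  rw [mulVec_injective_iff, linearIndependent_iff_card_eq_finrank_span, ← h,
    rank_eq_finrank_span_cols]
  rfl

theorem Matrix.PosDef.mul_inv_mul_transpose_add {m n : Type*} [Fintype m] [Fintype n]
    [DecidableEq n] {A : Matrix n n ℝ} (hA : A.PosDef) {B : Matrix n n ℝ} (hB : B.PosSemidef)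
    (U : Matrix m n ℝ) {R : Matrix m m ℝ} (hR : R.PosDef) :
    (U * (A⁻¹ + B)⁻¹ * Uᵀ + R).PosDef :=
  PosDef.posSemidef_add ((hA.posSemidef.inv.add hB).inv.mul_mul_conjTranspose_same U) hR

theorem Matrix.PosDef.transpose_mul_mul_add {m n : Type*} [Fintype m] [Fintype n]
    {S : Matrix m m ℝ} (hS : S.PosDef) {W : Matrix m n ℝ} (hW : Function.Injective W.mulVec)
    {Δ : Matrix n n ℝ} (hΔ : Δ.PosSemidef) : (Wᵀ * S * W + Δ).PosDef :=
  (hS.conjTranspose_mul_mul_same hW).add_posSemidef hΔ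

theorem Matrix.add_inv_mul_eq_one_sub {n K : Type*} [Fintype n] [DecidableEq n] [CommRing K]
    {A Δ : Matrix n n K} (h : IsUnit (A + Δ).det) : (A + Δ)⁻¹ * A = 1 - (A + Δ)⁻¹ * Δ := by
  rw [eq_sub_iff_add_eq, ← Matrix.mul_add, nonsing_inv_mul _ h]

section CenteredVectors

variable {Ω ι : Type*} [MeasurableSpace Ω] {μ : Measure Ω} [Fintype ι] {X : Ω → ι → ℝ}

theorem integral_dotProduct_eq_zero (hX : ∀ i, Integrable (fun ω => X ω i) μ)
    (hX0 : ∀ i, ∫ ω, X ω i ∂μ = 0) (v : ι → ℝ) : ∫ ω, v ⬝ᵥ X ω ∂μ = 0 := by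
  simp only [dotProduct]
  rw [integral_finsetSum _ fun i _ => (hX i).const_mul _]
  simp [integral_const_mul, hX0]

theorem integral_const_add_dotProduct_add_dotProduct [IsProbabilityMeasure μ] {κ : Type*}
    [Fintype κ] {Z : Ω → κ → ℝ}
    (hX : ∀ i, Integrable (fun ω => X ω i) μ) (hX0 : ∀ i, ∫ ω, X ω i ∂μ = 0)
    (hZ : ∀ i, Integrable (fun ω => Z ω i) μ) (hZ0 : ∀ i, ∫ ω, Z ω i ∂μ = 0)
    (c : ℝ) (a : ι → ℝ) (b : κ → ℝ) :
    ∫ ω, c + a ⬝ᵥ X ω + b ⬝ᵥ Z ω ∂μ = c := by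
  have hXa := integrable_dotProduct hX a
  have hcXa : Integrable (fun ω => c + a ⬝ᵥ X ω) μ := (integrable_const c).add hXa
  rw [integral_add hcXa (integrable_dotProduct hZ b), integral_add (integrable_const c) hXa,
    integral_dotProduct_eq_zero hX hX0, integral_dotProduct_eq_zero hZ hZ0, integral_const]
  simp

end CenteredVectors

section BiasCorrectedWeights

variable {m n k R : Type*} [Fintype m] [Fintype n] [Fintype k] [DecidableEq n] [CommRing R]
  (G : Matrix n m R) (W : Matrix m n R) (K : Matrix n n R) (H : Matrix k m R)
  (l : n → R) (d : k → R)

def biasCorrectedWeights : m → R :=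
  l ᵥ* ((1 + K) * G) + d ᵥ* (H - H * W * (1 + K) * G)

theorem biasCorrected_eq_dotProduct (y : m → R) :
    l ⬝ᵥ (G *ᵥ y) + d ⬝ᵥ (H *ᵥ (y - W *ᵥ (G *ᵥ y))) + l ⬝ᵥ (K *ᵥ (G *ᵥ y))
      - d ⬝ᵥ ((H * W * K) *ᵥ (G *ᵥ y)) = biasCorrectedWeights G W K H l d ⬝ᵥ y := by
  simp only [biasCorrectedWeights, add_dotProduct, dotProduct_mulVec, vecMul_vecMul,
    Matrix.mul_add, Matrix.add_mul, Matrix.mul_one, Matrix.one_mul, vecMul_sub, vecMul_add,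
    dotProduct_sub, sub_dotProduct, Matrix.mul_assoc]
  ring

variable {G W K}

theorem biasCorrectedWeights_vecMul (hGW : G * W = 1 - K) :
    biasCorrectedWeights G W K H l d ᵥ* W = l - l ᵥ* (K * K) + d ᵥ* (H * W * (K * K)) := by
  have h₁ : (1 + K) * G * W = 1 - K * K := by
    rw [Matrix.mul_assoc, hGW, Matrix.mul_sub, Matrix.mul_one, Matrix.add_mul, Matrix.one_mul]
    abel
  have h₂ : (H - H * W * (1 + K) * G) * W = H * W * (K * K) := by
    rw [Matrix.sub_mul, Matrix.mul_assoc (H * W), Matrix.mul_assoc (H * W), h₁, Matrix.mul_sub, Matrix.mul_one, sub_sub_cancel]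
  rw [biasCorrectedWeights, add_vecMul, vecMul_vecMul, vecMul_vecMul, h₁, h₂, vecMul_sub,
    vecMul_one]

end BiasCorrectedWeights

theorem bias_corrected_predictor_bias_general
    {N p q : ℕ}
    (W : Matrix (Fin N) (Fin p) ℝ) (U : Matrix (Fin N) (Fin q) ℝ)
    (θ : Fin p → ℝ) (l : Fin p → ℝ) (d : Fin q → ℝ)
    (Ωm : Matrix (Fin q) (Fin q) ℝ) (R : Matrix (Fin N) (Fin N) ℝ)
    (Δβ : Matrix (Fin p) (Fin p) ℝ) (Δν : Matrix (Fin q) (Fin q) ℝ)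
    (hW : W.rank = p) (hΩ : Ωm.PosDef) (hR : R.PosDef)
    (hΔβ : Δβ.PosSemidef) (hΔν : Δν.PosSemidef)
    {Zs : Type*} [MeasurableSpace Zs] (μ : Measure Zs) [IsProbabilityMeasure μ]
    (α : Zs → Fin q → ℝ) (e : Zs → Fin N → ℝ)
    (hαint : ∀ i, Integrable (fun ω => α ω i) μ)
    (heint : ∀ i, Integrable (fun ω => e ω i) μ)
    (hα0 : ∀ i, ∫ ω, α ω i ∂μ = 0)
    (he0 : ∀ i, ∫ ω, e ω i ∂μ = 0)
    (Ωstar : Matrix (Fin q) (Fin q) ℝ)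
    (Sstar : Matrix (Fin N) (Fin N) ℝ)
    (hSstar : Sstar = U * (Ωm⁻¹ + Δν)⁻¹ * Uᵀ + R)
    (Y : Zs → Fin N → ℝ)
    (hY : ∀ ω, Y ω = W.mulVec θ + U.mulVec (α ω) + e ω)
    (θt : Zs → Fin p → ℝ)
    (hθt : ∀ ω, θt ω = ((Wᵀ * Sstar⁻¹ * W + Δβ)⁻¹ * Wᵀ * Sstar⁻¹).mulVec (Y ω))
    (αt : Zs → Fin q → ℝ)
    (hαt : ∀ ω, αt ω = (Ωstar * Uᵀ * Sstar⁻¹).mulVec (Y ω - W.mulVec (θt ω)))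
    (Ac : Zs → ℝ)
    (hAc : ∀ ω, Ac ω =
      l ⬝ᵥ θt ω + d ⬝ᵥ αt ω
      + l ⬝ᵥ (((Wᵀ * Sstar⁻¹ * W + Δβ)⁻¹ * Δβ).mulVec (θt ω))
      - d ⬝ᵥ ((Ωstar * Uᵀ * Sstar⁻¹ * W * (Wᵀ * Sstar⁻¹ * W + Δβ)⁻¹ * Δβ).mulVec (θt ω))) :
    (∫ ω, (Ac ω - (l ⬝ᵥ θ + d ⬝ᵥ α ω)) ∂μ) =
      -(l ⬝ᵥ (((Wᵀ * Sstar⁻¹ * W + Δβ)⁻¹ * Δβ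
          * (Wᵀ * Sstar⁻¹ * W + Δβ)⁻¹ * Δβ).mulVec θ))
      + d ⬝ᵥ ((Ωstar * Uᵀ * Sstar⁻¹ * W * (Wᵀ * Sstar⁻¹ * W + Δβ)⁻¹ * Δβ
          * (Wᵀ * Sstar⁻¹ * W + Δβ)⁻¹ * Δβ).mulVec θ) := by
  have hS : Sstar.PosDef := hSstar ▸ hΩ.mul_inv_mul_transpose_add hΔν U hR
  have hWinj : Function.Injective W.mulVec :=
    mulVec_injective_of_rank_eq_card_s2 (by rw [hW, Fintype.card_fin])
  have hM := (hS.inv.transpose_mul_mul_add hWinj hΔβ).det_pos.ne'.isUnit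
  set M := Wᵀ * Sstar⁻¹ * W + Δβ
  set K := M⁻¹ * Δβ
  set G := M⁻¹ * Wᵀ * Sstar⁻¹
  set H := Ωstar * Uᵀ * Sstar⁻¹
  have hGW : G * W = 1 - K := by
    rw [show G * W = M⁻¹ * (Wᵀ * Sstar⁻¹ * W) by simp only [G, Matrix.mul_assoc]]
    exact add_inv_mul_eq_one_sub hM
  set φ := biasCorrectedWeights G W K H l d
  have hbias : ∀ ω, Ac ω - (l ⬝ᵥ θ + d ⬝ᵥ α ω)
      = (φ ᵥ* W - l) ⬝ᵥ θ + (φ ᵥ* U - d) ⬝ᵥ α ω + φ ⬝ᵥ e ω := by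
    intro ω
    rw [hAc, hαt, hθt, Matrix.mul_assoc (H * W), biasCorrected_eq_dotProduct, hY]
    simp only [dotProduct_add, sub_dotProduct, dotProduct_mulVec]
    ring
  rw [integral_congr_ae (ae_of_all _ hbias),
    integral_const_add_dotProduct_add_dotProduct hαint hα0 heint he0,
    biasCorrectedWeights_vecMul H l d hGW]
  simp only [sub_dotProduct, add_dotProduct, dotProduct_mulVec l, dotProduct_mulVec d, K,
    Matrix.mul_assoc]
  ring

/-- bias of the bias-corrected predictor Ã_c. -/
theorem bias_corrected_predictor_bias
    {N p q : ℕ}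
    (W : Matrix (Fin N) (Fin p) ℝ) (U : Matrix (Fin N) (Fin q) ℝ)
    (θ : Fin p → ℝ) (l : Fin p → ℝ) (d : Fin q → ℝ)
    (Ωm : Matrix (Fin q) (Fin q) ℝ) (R : Matrix (Fin N) (Fin N) ℝ)
    (Δβ : Matrix (Fin p) (Fin p) ℝ) (Δν : Matrix (Fin q) (Fin q) ℝ)
    (hW : W.rank = p) (hΩ : Ωm.PosDef) (hR : R.PosDef)
    (hΔβ : Δβ.PosSemidef) (hΔν : Δν.PosSemidef)
    {Zs : Type*} [MeasurableSpace Zs] (μ : Measure Zs) [IsProbabilityMeasure μ]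
    (α : Zs → Fin q → ℝ) (e : Zs → Fin N → ℝ)
    (hmα : Measurable α) (hme : Measurable e)
    (hindep : IndepFun α e μ)
    (hαint : ∀ i, Integrable (fun ω => α ω i) μ)
    (heint : ∀ i, Integrable (fun ω => e ω i) μ)
    (hα0 : ∀ i, ∫ ω, α ω i ∂μ = 0)
    (he0 : ∀ i, ∫ ω, e ω i ∂μ = 0)
    (Ωstar : Matrix (Fin q) (Fin q) ℝ) (hΩstar : Ωstar = (Ωm⁻¹ + Δν)⁻¹)
    (Sstar : Matrix (Fin N) (Fin N) ℝ)
    (hSstar : Sstar = U * (Ωm⁻¹ + Δν)⁻¹ * Uᵀ + R)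
    (Y : Zs → Fin N → ℝ)
    (hY : ∀ ω, Y ω = W.mulVec θ + U.mulVec (α ω) + e ω)
    (θt : Zs → Fin p → ℝ)
    (hθt : ∀ ω, θt ω = ((Wᵀ * Sstar⁻¹ * W + Δβ)⁻¹ * Wᵀ * Sstar⁻¹).mulVec (Y ω))
    (αt : Zs → Fin q → ℝ)
    (hαt : ∀ ω, αt ω = (Ωstar * Uᵀ * Sstar⁻¹).mulVec (Y ω - W.mulVec (θt ω)))
    (Ac : Zs → ℝ)
    (hAc : ∀ ω, Ac ω =
      l ⬝ᵥ θt ω + d ⬝ᵥ αt ω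
      + l ⬝ᵥ (((Wᵀ * Sstar⁻¹ * W + Δβ)⁻¹ * Δβ).mulVec (θt ω))
      - d ⬝ᵥ ((Ωstar * Uᵀ * Sstar⁻¹ * W * (Wᵀ * Sstar⁻¹ * W + Δβ)⁻¹ * Δβ).mulVec (θt ω))) :
    (∫ ω, (Ac ω - (l ⬝ᵥ θ + d ⬝ᵥ α ω)) ∂μ) =
      -(l ⬝ᵥ (((Wᵀ * Sstar⁻¹ * W + Δβ)⁻¹ * Δβ
          * (Wᵀ * Sstar⁻¹ * W + Δβ)⁻¹ * Δβ).mulVec θ))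
      + d ⬝ᵥ ((Ωstar * Uᵀ * Sstar⁻¹ * W * (Wᵀ * Sstar⁻¹ * W + Δβ)⁻¹ * Δβ
          * (Wᵀ * Sstar⁻¹ * W + Δβ)⁻¹ * Δβ).mulVec θ) :=
  bias_corrected_predictor_bias_general W U θ l d Ωm R Δβ Δν hW hΩ hR hΔβ hΔν μ α e hαint heint hα0
    he0 Ωstar Sstar hSstar Y hY θt hθt αt hαt Ac hAc
end

section
/- Joint minimization: given Y, the pair (θ̃, α̃) with θ̃ = (WᵀΣ*⁻¹W+Δ_β)⁻¹WᵀΣ*⁻¹Y and α̃ = Ω*UᵀΣ*⁻¹(Y − Wθ̃), where Σ* = UΩ*Uᵀ + R and Ω* = (Ω⁻¹+Δ_ν)⁻¹, is the unique minimizer of ℓ(θ,α) = (Y−Wθ−Uα)ᵀR⁻¹(Y−Wθ−Uα) + αᵀΩ⁻¹α + θᵀΔ_βθ + αᵀΔ_να over (θ,α) ∈ ℝᵖ×ℝ^q. -/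
/-!
Write `e = Y - Wθ̃ - Uα̃`. Since `Σ* - UΩ*Uᵀ = R`, the residual satisfies `R⁻¹e = Σ*⁻¹(Y - Wθ̃)`,
and with this the closed form of `(θ̃, α̃)` is exactly the pair of normal equations
`WᵀR⁻¹e = Δ_β θ̃` and `UᵀR⁻¹e = (Ω⁻¹ + Δ_ν) α̃`. Expanding the quadratic objective around a solution
of the normal equations, the linear terms cancel, so `ℓ(θ̃ + d, α̃ + δ) = ℓ(θ̃, α̃) + ℓ₀(d, δ)` with
`ℓ₀` the objective for data `Y = 0`. Finally `ℓ₀(d, δ) > 0` unless `(d, δ) = 0`: for `δ ≠ 0` the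
term `δᵀΩ⁻¹δ` is positive, and for `δ = 0, d ≠ 0` so is `(Wd)ᵀR⁻¹(Wd)`, as `W` is injective.
-/

open Matrix

theorem Matrix.mulVec_injective_of_rank_eq {K m n : Type*} [Field K] [Fintype m] [Fintype n]
    {W : Matrix m n K} (hW : W.rank = Fintype.card n) : Function.Injective W.mulVec := by
  have h := W.mulVecLin.finrank_range_add_finrank_ker
  rw [show Module.finrank K (LinearMap.range W.mulVecLin) = Fintype.card n from hW,
    Module.finrank_fintype_fun_eq_card] at h
  have hker : Module.finrank K (LinearMap.ker W.mulVecLin) = 0 := by omega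
  exact LinearMap.ker_eq_bot.mp (Submodule.finrank_eq_zero.mp hker)

theorem Matrix.IsSymm.dotProduct_mulVec_add {R n : Type*} [CommRing R] [Fintype n]
    {A : Matrix n n R} (hA : A.IsSymm) (x y : n → R) :
    (x + y) ⬝ᵥ A *ᵥ (x + y) = x ⬝ᵥ A *ᵥ x + 2 * (y ⬝ᵥ A *ᵥ x) + y ⬝ᵥ A *ᵥ y := by
  have hxy : x ⬝ᵥ A *ᵥ y = y ⬝ᵥ A *ᵥ x := by
    rw [← dotProduct_transpose_mulVec A x y, hA.eq]
  rw [mulVec_add, dotProduct_add, add_dotProduct, add_dotProduct, hxy]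
  ring

theorem Matrix.inv_mulVec_sub_mul_inv_add_mulVec {K n : Type*} [Field K] [Fintype n]
    [DecidableEq n] {C R : Matrix n n K} (hR : IsUnit R) (hCR : IsUnit (C + R)) (r : n → K) :
    R⁻¹ *ᵥ (r - (C * (C + R)⁻¹) *ᵥ r) = (C + R)⁻¹ *ᵥ r := by
  have hRS : R * (C + R)⁻¹ = 1 - C * (C + R)⁻¹ := by
    rw [eq_sub_iff_add_eq, ← add_mul, add_comm,
      mul_nonsing_inv _ ((isUnit_iff_isUnit_det _).mp hCR)]
  calc R⁻¹ *ᵥ (r - (C * (C + R)⁻¹) *ᵥ r) = (R⁻¹ * (R * (C + R)⁻¹)) *ᵥ r := by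
        rw [hRS, ← mulVec_mulVec (M := R⁻¹), sub_mulVec, one_mulVec]
    _ = (C + R)⁻¹ *ᵥ r := by
        rw [← Matrix.mul_assoc, nonsing_inv_mul _ ((isUnit_iff_isUnit_det _).mp hR),
          Matrix.one_mul]

theorem normal_eqns_of_closed_form {K n k m : Type*} [Field K] [Fintype n] [Fintype k]
    [Fintype m] [DecidableEq n] [DecidableEq k] [DecidableEq m] {W : Matrix n k K}
    {U : Matrix n m K} {R S : Matrix n n K} {Ωs P : Matrix m m K} {Δβ : Matrix k k K}
    (hR : IsUnit R) (hP : IsUnit P) (hΩs : Ωs = P⁻¹) (hS : S = U * Ωs * Uᵀ + R)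
    (hSunit : IsUnit S) (hK : IsUnit (Wᵀ * S⁻¹ * W + Δβ)) {Y : n → K} {θ : k → K} {α : m → K}
    (hθ : θ = ((Wᵀ * S⁻¹ * W + Δβ)⁻¹ * Wᵀ * S⁻¹) *ᵥ Y)
    (hα : α = (Ωs * Uᵀ * S⁻¹) *ᵥ (Y - W *ᵥ θ)) :
    Wᵀ *ᵥ R⁻¹ *ᵥ (Y - W *ᵥ θ - U *ᵥ α) = Δβ *ᵥ θ ∧
      Uᵀ *ᵥ R⁻¹ *ᵥ (Y - W *ᵥ θ - U *ᵥ α) = P *ᵥ α := by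
  have hres : R⁻¹ *ᵥ (Y - W *ᵥ θ - U *ᵥ α) = S⁻¹ *ᵥ (Y - W *ᵥ θ) := by
    subst hS
    rw [hα, mulVec_mulVec, ← Matrix.inv_mulVec_sub_mul_inv_add_mulVec hR hSunit]
    simp only [Matrix.mul_assoc]
  have hKθ : (Wᵀ * S⁻¹ * W + Δβ) *ᵥ θ = (Wᵀ * S⁻¹) *ᵥ Y := by
    rw [hθ, mulVec_mulVec, ← Matrix.mul_assoc, ← Matrix.mul_assoc,
      mul_nonsing_inv _ ((isUnit_iff_isUnit_det _).mp hK), Matrix.one_mul]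
  refine ⟨?_, ?_⟩
  · rw [hres, mulVec_sub, mulVec_mulVec, mulVec_sub, mulVec_mulVec, mulVec_mulVec,
      ← Matrix.mul_assoc, ← hKθ, add_mulVec, add_sub_cancel_left]
  · rw [hres, hα, hΩs, mulVec_mulVec, mulVec_mulVec, ← Matrix.mul_assoc, ← Matrix.mul_assoc,
      mul_nonsing_inv _ ((isUnit_iff_isUnit_det _).mp hP), Matrix.one_mul]

/-- The objective `ℓ`, with the precision matrices `A = R⁻¹` and `B = Ω⁻¹` as parameters. -/
def jointLoss {n k m : Type*} [Fintype n] [Fintype k] [Fintype m]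
    (W : Matrix n k ℝ) (U : Matrix n m ℝ) (A : Matrix n n ℝ) (B : Matrix m m ℝ)
    (Δβ : Matrix k k ℝ) (Δν : Matrix m m ℝ) (Y : n → ℝ) (t : k → ℝ) (a : m → ℝ) : ℝ :=
  (Y - W *ᵥ t - U *ᵥ a) ⬝ᵥ A *ᵥ (Y - W *ᵥ t - U *ᵥ a)
    + a ⬝ᵥ B *ᵥ a + t ⬝ᵥ Δβ *ᵥ t + a ⬝ᵥ Δν *ᵥ a

section jointLoss

variable {n k m : Type*} [Fintype n] [Fintype k] [Fintype m]
  {W : Matrix n k ℝ} {U : Matrix n m ℝ} {A : Matrix n n ℝ} {B : Matrix m m ℝ}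
  {Δβ : Matrix k k ℝ} {Δν : Matrix m m ℝ}

/-- The cross terms of the expansion are exactly the normal equations `hθ` and `hα`. -/
theorem jointLoss_add_of_normal_eqns (hA : A.IsSymm) (hB : B.IsSymm) (hΔβ : Δβ.IsSymm)
    (hΔν : Δν.IsSymm) {Y : n → ℝ} {θ : k → ℝ} {α : m → ℝ}
    (hθ : Wᵀ *ᵥ A *ᵥ (Y - W *ᵥ θ - U *ᵥ α) = Δβ *ᵥ θ)
    (hα : Uᵀ *ᵥ A *ᵥ (Y - W *ᵥ θ - U *ᵥ α) = (B + Δν) *ᵥ α) (dt : k → ℝ) (da : m → ℝ) :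
    jointLoss W U A B Δβ Δν Y (θ + dt) (α + da)
      = jointLoss W U A B Δβ Δν Y θ α + jointLoss W U A B Δβ Δν 0 dt da := by
  set e := Y - W *ᵥ θ - U *ᵥ α
  have hres : Y - W *ᵥ (θ + dt) - U *ᵥ (α + da) = e + (0 - W *ᵥ dt - U *ᵥ da) := by
    simp only [e, mulVec_add]; abel
  have hcross : (0 - W *ᵥ dt - U *ᵥ da) ⬝ᵥ A *ᵥ e
      = -(dt ⬝ᵥ Δβ *ᵥ θ + (da ⬝ᵥ B *ᵥ α + da ⬝ᵥ Δν *ᵥ α)) := by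
    rw [zero_sub, sub_eq_add_neg, ← neg_add, neg_dotProduct, add_dotProduct,
      dotProduct_comm (W *ᵥ dt), ← dotProduct_transpose_mulVec W dt, hθ,
      dotProduct_comm (U *ᵥ da), ← dotProduct_transpose_mulVec U da, hα, add_mulVec,
      dotProduct_add]
  unfold jointLoss
  rw [hres, hA.dotProduct_mulVec_add, hB.dotProduct_mulVec_add, hΔβ.dotProduct_mulVec_add,
    hΔν.dotProduct_mulVec_add, hcross]
  ring

theorem jointLoss_zero_pos (hW : Function.Injective W.mulVec) (hA : A.PosDef) (hB : B.PosDef)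
    (hΔβ : Δβ.PosSemidef) (hΔν : Δν.PosSemidef) {dt : k → ℝ} {da : m → ℝ} (hd : (dt, da) ≠ 0) :
    0 < jointLoss W U A B Δβ Δν 0 dt da := by
  have hr := hA.posSemidef.dotProduct_mulVec_nonneg (0 - W *ᵥ dt - U *ᵥ da)
  have hb := hB.posSemidef.dotProduct_mulVec_nonneg da
  have hβ := hΔβ.dotProduct_mulVec_nonneg dt
  have hν := hΔν.dotProduct_mulVec_nonneg da
  simp only [star_trivial] at hr hb hβ hν
  unfold jointLoss
  by_cases hda : da = 0
  · have hdt : dt ≠ 0 := fun hdt ↦ hd (by rw [hdt, hda]; rfl)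
    have hv : 0 - W *ᵥ dt - U *ᵥ da ≠ 0 := by
      rw [hda, mulVec_zero, sub_zero, zero_sub, neg_ne_zero]
      exact fun h ↦ hdt (hW (by rw [h, mulVec_zero]))
    have := hA.dotProduct_mulVec_pos hv
    simp only [star_trivial] at this
    linarith
  · have := hB.dotProduct_mulVec_pos hda
    simp only [star_trivial] at this
    linarith

end jointLoss

/-- (θ̃, α̃) is the unique joint minimizer of the penalized objective. -/
theorem joint_minimizer
    {N p q : ℕ}
    (W : Matrix (Fin N) (Fin p) ℝ) (hW : W.rank = p)
    (U : Matrix (Fin N) (Fin q) ℝ)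
    (R : Matrix (Fin N) (Fin N) ℝ) (Ωm : Matrix (Fin q) (Fin q) ℝ)
    (hR : R.PosDef) (hΩ : Ωm.PosDef)
    (Δβ : Matrix (Fin p) (Fin p) ℝ) (Δν : Matrix (Fin q) (Fin q) ℝ)
    (hΔβ : Δβ.PosSemidef) (hΔν : Δν.PosSemidef)
    (Ωstar : Matrix (Fin q) (Fin q) ℝ) (hΩstar : Ωstar = (Ωm⁻¹ + Δν)⁻¹)
    (Sstar : Matrix (Fin N) (Fin N) ℝ) (hSstar : Sstar = U * Ωstar * Uᵀ + R)
    (hK : IsUnit (Wᵀ * Sstar⁻¹ * W + Δβ))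
    (Y : Fin N → ℝ)
    (ℓ : (Fin p → ℝ) → (Fin q → ℝ) → ℝ)
    (hℓ : ∀ t a, ℓ t a =
      (Y - W.mulVec t - U.mulVec a) ⬝ᵥ (R⁻¹.mulVec (Y - W.mulVec t - U.mulVec a))
      + a ⬝ᵥ (Ωm⁻¹.mulVec a) + t ⬝ᵥ (Δβ.mulVec t) + a ⬝ᵥ (Δν.mulVec a))
    (θt : Fin p → ℝ)
    (hθt : θt = ((Wᵀ * Sstar⁻¹ * W + Δβ)⁻¹ * Wᵀ * Sstar⁻¹).mulVec Y)
    (αt : Fin q → ℝ)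
    (hαt : αt = (Ωstar * Uᵀ * Sstar⁻¹).mulVec (Y - W.mulVec θt)) :
    ∀ (t : Fin p → ℝ) (a : Fin q → ℝ), (t, a) ≠ (θt, αt) → ℓ θt αt < ℓ t a := by
  have hP : (Ωm⁻¹ + Δν).PosDef := hΩ.inv.add_posSemidef hΔν
  have hΩs : Ωstar.PosDef := hΩstar ▸ hP.inv
  have hS : Sstar.PosDef := by
    rw [hSstar]
    have hUΩU : (U * Ωstar * Uᵀ).PosSemidef := by
      simpa using hΩs.posSemidef.mul_mul_conjTranspose_same U
    exact PosDef.posSemidef_add hUΩU hR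
  obtain ⟨hθ, hα⟩ :=
    normal_eqns_of_closed_form hR.isUnit hP.isUnit hΩstar hSstar hS.isUnit hK hθt hαt
  have hsymm {n : ℕ} {A : Matrix (Fin n) (Fin n) ℝ} (hA : A.PosSemidef) : A.IsSymm :=
    isHermitian_iff_isSymm.mp hA.isHermitian
  have hℓ' : ℓ = jointLoss W U R⁻¹ Ωm⁻¹ Δβ Δν Y := funext fun t ↦ funext (hℓ t)
  intro t a hne
  have hsplit := jointLoss_add_of_normal_eqns (hsymm hR.inv.posSemidef)
    (hsymm hΩ.inv.posSemidef) (hsymm hΔβ) (hsymm hΔν) hθ hα (t - θt) (a - αt)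
  rw [add_sub_cancel, add_sub_cancel] at hsplit
  have hpos : 0 < jointLoss W U R⁻¹ Ωm⁻¹ Δβ Δν 0 (t - θt) (a - αt) :=
    jointLoss_zero_pos (mulVec_injective_of_rank_eq (by simpa using hW)) hR.inv hΩ.inv hΔβ hΔν
      (sub_ne_zero.mpr hne)
  rw [hℓ', hsplit]
  linarith
end
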